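/- arXiv:math/0311422 — 2 statements merged into one kernel-verified Lean document; each statement's English description precedes it below -/
import Mathlib

section
/- Let (Ω, F, P) be a probability space, θ : Ω → Ω a measure-preserving transformation, and g : Ω → (0,∞) a measurable function such that log⁺(g(θω)/g(ω)) is integrable with respect to P. Then g is tempered, i.e. lim_{n→∞} (1/n) log g(θⁿ(ω)) = 0 for P-almost every ω. -/
open MeasureTheory Filter Topology

/-!
With `ℓ = log g` and `f = ℓ ∘ θ - ℓ`, the Birkhoff sums of `f` telescope to `ℓ ∘ θⁿ - ℓ`.
Truncating `ℓ` to `[-c, c]` yields coboundaries of integral zero that are bounded above by `f⁺`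
and in absolute value by `|f|`; Fatou's lemma makes `f` integrable, and dominated convergence
gives `∫ f = 0`, for the restriction of `P` to any forward invariant set as well.
The set `D` where `ℓ (θⁿ ω) > ε n` infinitely often is forward invariant, and on it the Birkhoff
sums of `f - ε / 2` take positive values, so Hopf's maximal ergodic lemma gives
`(ε / 2) P(D) ≤ ∫_D f = 0`. Applied to `ℓ` and `-ℓ`, this gives `ℓ (θⁿ ω) / n → 0` almost surely.
-/

section Truncation

noncomputable def truncate (c x : ℝ) : ℝ := max (min x c) (-c)

theorem truncate_mono (c : ℝ) : Monotone (truncate c) := fun _ _ h =>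
  max_le_max (min_le_min h le_rfl) le_rfl

theorem abs_truncate_sub_truncate_le (c a b : ℝ) : |truncate c a - truncate c b| ≤ |a - b| := by
  refine (abs_max_sub_max_le_abs _ _ _).trans ?_
  simpa using abs_min_sub_min_le_max a c b c

theorem truncate_sub_truncate_le (c a b : ℝ) : truncate c a - truncate c b ≤ max (a - b) 0 := by
  rcases le_total a b with hab | hab
  · exact (sub_nonpos.mpr (truncate_mono c hab)).trans (le_max_right _ _)
  · calc truncate c a - truncate c b ≤ |a - b| :=
          (le_abs_self _).trans (abs_truncate_sub_truncate_le c a b)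
      _ = a - b := abs_of_nonneg (sub_nonneg.mpr hab)
      _ ≤ max (a - b) 0 := le_max_left _ _

theorem abs_truncate_le {c : ℝ} (hc : 0 ≤ c) (x : ℝ) : |truncate c x| ≤ c :=
  abs_le.mpr ⟨le_max_right _ _, max_le (min_le_right _ _) (by linarith)⟩

theorem truncate_eq_self {c x : ℝ} (h : |x| ≤ c) : truncate c x = x := by
  rw [abs_le] at h
  rw [truncate, min_eq_left h.2, max_eq_left h.1]

theorem tendsto_truncate (x : ℝ) : Tendsto (fun c : ℕ => truncate c x) atTop (𝓝 x) :=
  tendsto_const_nhds.congr' <| (tendsto_natCast_atTop_atTop.eventually_ge_atTop |x|).mono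
    fun _ hc => (truncate_eq_self hc).symm

theorem measurable_truncate (c : ℝ) : Measurable (truncate c) :=
  (measurable_id.min measurable_const).max measurable_const

end Truncation

section Fatou

variable {α : Type*} [MeasurableSpace α] {μ : Measure α}

theorem integrable_of_tendsto_of_integral_le {F : ℕ → α → ℝ} {f : α → ℝ} {C : ℝ}
    (hFi : ∀ n, Integrable (F n) μ) (hF0 : ∀ n, 0 ≤ᵐ[μ] F n)
    (hlim : ∀ᵐ x ∂μ, Tendsto (fun n => F n x) atTop (𝓝 (f x)))
    (hC : ∀ n, ∫ x, F n x ∂μ ≤ C) : Integrable f μ := by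
  refine ⟨aestronglyMeasurable_of_tendsto_ae _ (fun n => (hFi n).1) hlim, ?_⟩
  have hfatou : ∫⁻ x, ‖f x‖ₑ ∂μ ≤ liminf (fun n => ∫⁻ x, ‖F n x‖ₑ ∂μ) atTop :=
    lintegral_congr_ae (by filter_upwards [hlim] with x hx using hx.enorm.liminf_eq) ▸
      lintegral_liminf_le' fun n => (hFi n).1.aemeasurable.enorm
  have hbound (n : ℕ) : ∫⁻ x, ‖F n x‖ₑ ∂μ ≤ ENNReal.ofReal C := by
    rw [← ofReal_integral_norm_eq_lintegral_enorm (hFi n),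
      integral_congr_ae ((hF0 n).mono fun x hx => Real.norm_of_nonneg hx)]
    exact ENNReal.ofReal_le_ofReal (hC n)
  exact hfatou.trans_lt <|
    (liminf_le_of_frequently_le (.of_forall hbound)).trans_lt ENNReal.ofReal_lt_top

end Fatou

section MaximalErgodic

variable {α : Type*} {θ : α → α} {h : α → ℝ}

/-- `maxBirkhoffSum θ h N x = max_{k ≤ N} birkhoffSum θ h k x`. -/
noncomputable def maxBirkhoffSum (θ : α → α) (h : α → ℝ) : ℕ → α → ℝ
  | 0 => fun _ => 0
  | N + 1 => fun x => max 0 (h x + maxBirkhoffSum θ h N (θ x))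

theorem maxBirkhoffSum_nonneg (θ : α → α) (h : α → ℝ) (N : ℕ) (x : α) :
    0 ≤ maxBirkhoffSum θ h N x := by
  cases N with
  | zero => exact le_rfl
  | succ N => exact le_max_left _ _

theorem maxBirkhoffSum_le_succ (θ : α → α) (h : α → ℝ) (N : ℕ) (x : α) :
    maxBirkhoffSum θ h N x ≤ maxBirkhoffSum θ h (N + 1) x := by
  induction N generalizing x with
  | zero => exact maxBirkhoffSum_nonneg θ h 1 x
  | succ N ih => exact max_le_max le_rfl (add_le_add le_rfl (ih (θ x)))

theorem birkhoffSum_le_maxBirkhoffSum (θ : α → α) (h : α → ℝ) (N : ℕ) (x : α) :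
    birkhoffSum θ h N x ≤ maxBirkhoffSum θ h N x := by
  induction N generalizing x with
  | zero => simp [maxBirkhoffSum]
  | succ N ih =>
    rw [birkhoffSum_succ']
    exact (add_le_add le_rfl (ih (θ x))).trans (le_max_right _ _)

variable [MeasurableSpace α] {μ : Measure α}

theorem measurable_maxBirkhoffSum (hθ : Measurable θ) (hh : Measurable h) (N : ℕ) :
    Measurable (maxBirkhoffSum θ h N) := by
  induction N with
  | zero => exact measurable_const
  | succ N ih => exact measurable_const.max (hh.add (ih.comp hθ))

theorem integrable_maxBirkhoffSum (hθ : MeasurePreserving θ μ μ) (hhi : Integrable h μ) (N : ℕ) :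
    Integrable (maxBirkhoffSum θ h N) μ := by
  induction N with
  | zero => exact integrable_zero α ℝ μ
  | succ N ih =>
    refine ((hhi.add (hθ.integrable_comp_of_integrable ih)).pos_part).congr (.of_forall fun x => ?_)
    simp [maxBirkhoffSum, max_comm]

theorem MeasureTheory.MeasurePreserving.integral_comp_of_aestronglyMeasurable
    (hθ : MeasurePreserving θ μ μ) {u : α → ℝ} (hu : AEStronglyMeasurable u μ) :
    ∫ x, u (θ x) ∂μ = ∫ x, u x ∂μ := by
  rw [← integral_map hθ.measurable.aemeasurable (by rwa [hθ.map_eq]), hθ.map_eq]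

/-- Hopf's maximal ergodic lemma. -/
theorem setIntegral_maxBirkhoffSum_pos_nonneg (hθ : MeasurePreserving θ μ μ)
    (hhm : Measurable h) (hhi : Integrable h μ) (N : ℕ) :
    0 ≤ ∫ x in {x | 0 < maxBirkhoffSum θ h N x}, h x ∂μ := by
  cases N with
  | zero => simp [maxBirkhoffSum]
  | succ N =>
    set M := maxBirkhoffSum θ h (N + 1)
    set A := {x | 0 < M x}
    have hMm : Measurable M := measurable_maxBirkhoffSum hθ.measurable hhm _
    have hMi : Integrable M μ := integrable_maxBirkhoffSum hθ hhi _
    have hMθi : Integrable (fun x => M (θ x)) μ := hθ.integrable_comp_of_integrable hMi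
    -- on `A` the maximum is attained by a nonempty Birkhoff sum, so `M ≤ h + M ∘ θ` there
    have hM_le (x : α) (hx : x ∈ A) : M x - M (θ x) ≤ h x := by
      have hMx : M x = h x + maxBirkhoffSum θ h N (θ x) := max_eq_right <| not_lt.mp fun hlt =>
        (show (0 : ℝ) < max 0 (h x + maxBirkhoffSum θ h N (θ x)) from hx).ne' (max_eq_left hlt.le)
      linarith [maxBirkhoffSum_le_succ θ h N (θ x)]
    have hMA : ∫ x in A, M x ∂μ = ∫ x, M x ∂μ :=
      setIntegral_eq_integral_of_ae_compl_eq_zero <| .of_forall fun x hx =>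
        le_antisymm (not_lt.mp hx) (maxBirkhoffSum_nonneg θ h _ x)
    calc (0 : ℝ) = ∫ x, M x ∂μ - ∫ x, M (θ x) ∂μ := by
          rw [hθ.integral_comp_of_aestronglyMeasurable hMi.1, sub_self]
      _ ≤ ∫ x in A, M x ∂μ - ∫ x in A, M (θ x) ∂μ := by
          rw [hMA]
          exact sub_le_sub_left (setIntegral_le_integral hMθi
            (.of_forall fun x => maxBirkhoffSum_nonneg θ h _ (θ x))) _
      _ = ∫ x in A, (M x - M (θ x)) ∂μ := (integral_sub hMi.integrableOn hMθi.integrableOn).symm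
      _ ≤ ∫ x in A, h x ∂μ := setIntegral_mono_on (hMi.sub hMθi).integrableOn hhi.integrableOn
          (measurableSet_lt measurable_const hMm) hM_le

theorem integral_nonneg_of_ae_exists_birkhoffSum_pos (hθ : MeasurePreserving θ μ μ)
    (hhm : Measurable h) (hhi : Integrable h μ)
    (hpos : ∀ᵐ x ∂μ, ∃ n, 0 < birkhoffSum θ h n x) : 0 ≤ ∫ x, h x ∂μ := by
  set A : ℕ → Set α := fun N => {x | 0 < maxBirkhoffSum θ h N x}
  have hAm (N : ℕ) : MeasurableSet (A N) :=
    measurableSet_lt measurable_const (measurable_maxBirkhoffSum hθ.measurable hhm N)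
  have hAmono : Monotone A := monotone_nat_of_le_succ fun N x hx =>
    hx.trans_le (maxBirkhoffSum_le_succ θ h N x)
  have hA_ae : ∀ᵐ x ∂μ, x ∈ ⋃ N, A N := hpos.mono fun x ⟨n, hn⟩ =>
    Set.mem_iUnion.mpr ⟨n, hn.trans_le (birkhoffSum_le_maxBirkhoffSum θ h n x)⟩
  rw [← setIntegral_eq_integral_of_ae_compl_eq_zero (hA_ae.mono fun x hx hx' => (hx' hx).elim)]
  exact ge_of_tendsto' (tendsto_setIntegral_of_monotone hAm hAmono hhi.integrableOn)
    (setIntegral_maxBirkhoffSum_pos_nonneg hθ hhm hhi)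

theorem mul_measureReal_univ_le_integral_of_ae_exists_birkhoffSum_gt [IsFiniteMeasure μ]
    (hθ : MeasurePreserving θ μ μ) {f : α → ℝ} (hfm : Measurable f) (hfi : Integrable f μ) {ε : ℝ}
    (hf : ∀ᵐ x ∂μ, ∃ n : ℕ, n * ε < birkhoffSum θ f n x) :
    ε * μ.real Set.univ ≤ ∫ x, f x ∂μ := by
  have hsum (n : ℕ) (x : α) :
      birkhoffSum θ (fun y => f y - ε) n x = birkhoffSum θ f n x - n * ε := by
    simp [birkhoffSum, Finset.sum_sub_distrib]
  have := integral_nonneg_of_ae_exists_birkhoffSum_pos (h := fun y => f y - ε) hθ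
    (hfm.sub measurable_const) (hfi.sub (integrable_const ε))
    (hf.mono fun x ⟨n, hn⟩ => ⟨n, by rw [hsum]; linarith⟩)
  rw [integral_sub hfi (integrable_const ε), integral_const, smul_eq_mul] at this
  linarith

end MaximalErgodic

section Coboundary

variable {α : Type*} {θ : α → α} {ℓ : α → ℝ}

theorem birkhoffSum_coboundary (θ : α → α) (ℓ : α → ℝ) (n : ℕ) (x : α) :
    birkhoffSum θ (fun y => ℓ (θ y) - ℓ y) n x = ℓ (θ^[n] x) - ℓ x := by
  simp only [birkhoffSum, ← Function.iterate_succ_apply' θ]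
  exact Finset.sum_range_sub (fun k => ℓ (θ^[k] x)) n

variable [MeasurableSpace α] {μ : Measure α}

theorem MeasureTheory.MeasurePreserving.restrict_of_mapsTo [IsFiniteMeasure μ]
    (hθ : MeasurePreserving θ μ μ) {s : Set α} (hs : MeasurableSet s) (hmaps : Set.MapsTo θ s s) :
    MeasurePreserving θ (μ.restrict s) (μ.restrict s) := by
  have hpre : θ ⁻¹' s =ᵐ[μ] s := (ae_eq_of_subset_of_measure_ge hmaps
    (hθ.measure_preimage hs.nullMeasurableSet).le hs.nullMeasurableSet (measure_ne_top μ _)).symm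
  simpa only [Measure.restrict_congr_set hpre] using hθ.restrict_preimage hs

theorem integral_comp_sub_eq_zero (hθ : MeasurePreserving θ μ μ) {u : α → ℝ}
    (hu : Integrable u μ) : ∫ x, (u (θ x) - u x) ∂μ = 0 := by
  rw [integral_sub (f := fun x => u (θ x)) (hθ.integrable_comp_of_integrable hu) hu,
    hθ.integral_comp_of_aestronglyMeasurable hu.1, sub_self]

theorem integrable_truncate_comp [IsFiniteMeasure μ] (hℓ : Measurable ℓ) (c : ℕ) :
    Integrable (fun x => truncate c (ℓ x)) μ :=
  .of_bound ((measurable_truncate c).comp hℓ).aestronglyMeasurable c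
    (.of_forall fun _ => abs_truncate_le c.cast_nonneg _)

theorem integrable_coboundary_of_integrable_posPart [IsFiniteMeasure μ]
    (hθ : MeasurePreserving θ μ μ) (hℓ : Measurable ℓ)
    (hpos : Integrable (fun x => max (ℓ (θ x) - ℓ x) 0) μ) :
    Integrable (fun x => ℓ (θ x) - ℓ x) μ := by
  set f := fun x => ℓ (θ x) - ℓ x
  have hfc (c : ℕ) : Integrable (fun x => truncate c (ℓ (θ x)) - truncate c (ℓ x)) μ :=
    (hθ.integrable_comp_of_integrable (integrable_truncate_comp hℓ c)).sub
      (integrable_truncate_comp hℓ c)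
  -- Fatou for `f⁺ - f_c ≥ 0`, where `f_c` is the coboundary of `truncate c ∘ ℓ`: its integral
  -- is `∫ f⁺` because `∫ f_c = 0`, and it tends to `f⁺ - f = f⁻`
  have hneg : Integrable (fun x => max (f x) 0 - f x) μ :=
    integrable_of_tendsto_of_integral_le (C := ∫ x, max (f x) 0 ∂μ)
      (F := fun c x => max (f x) 0 - (truncate c (ℓ (θ x)) - truncate c (ℓ x)))
      (fun c => hpos.sub (hfc c))
      (fun c => .of_forall fun x => sub_nonneg.mpr (truncate_sub_truncate_le _ _ _))
      (.of_forall fun x => tendsto_const_nhds.sub ((tendsto_truncate _).sub (tendsto_truncate _)))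
      (fun c => by
        rw [integral_sub hpos (hfc c), integral_comp_sub_eq_zero hθ (integrable_truncate_comp hℓ c),
          sub_zero])
  exact (hpos.sub hneg).congr (.of_forall fun _ => sub_sub_cancel _ _)

theorem integral_coboundary_eq_zero [IsFiniteMeasure μ] (hθ : MeasurePreserving θ μ μ)
    (hℓ : Measurable ℓ) (hf : Integrable (fun x => ℓ (θ x) - ℓ x) μ) :
    ∫ x, (ℓ (θ x) - ℓ x) ∂μ = 0 := by
  refine tendsto_nhds_unique (tendsto_integral_of_dominated_convergence (fun x => |ℓ (θ x) - ℓ x|)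
    (F := fun (c : ℕ) x => truncate c (ℓ (θ x)) - truncate c (ℓ x))
    (fun c => (integrable_truncate_comp hℓ c).1.comp_measurePreserving hθ |>.sub
      (integrable_truncate_comp hℓ c).1) hf.abs
    (fun c => .of_forall fun x => abs_truncate_sub_truncate_le _ _ _)
    (.of_forall fun x => (tendsto_truncate _).sub (tendsto_truncate _))) ?_
  simp only [integral_comp_sub_eq_zero hθ (integrable_truncate_comp hℓ _), tendsto_const_nhds]

theorem ae_eventually_le_mul_of_coboundary [IsFiniteMeasure μ] (hθ : MeasurePreserving θ μ μ)
    (hℓ : Measurable ℓ) (hpos : Integrable (fun x => max (ℓ (θ x) - ℓ x) 0) μ)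
    {ε : ℝ} (hε : 0 < ε) : ∀ᵐ x ∂μ, ∀ᶠ n : ℕ in atTop, ℓ (θ^[n] x) ≤ ε * n := by
  set D := limsup (fun n : ℕ => {x | ε * n < ℓ (θ^[n] x)}) atTop with hD_def
  have hDm : MeasurableSet D := .measurableSet_limsup fun n =>
    measurableSet_lt measurable_const (hℓ.comp (hθ.measurable.iterate n))
  have hmaps : Set.MapsTo θ D D := fun x hx => by
    rw [hD_def, mem_limsup_iff_frequently_mem] at hx ⊢
    refine (tendsto_sub_atTop_nat 1).frequently <|
      (hx.and_eventually (eventually_ge_atTop 1)).mono fun n ⟨hn, hn1⟩ => ?_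
    show ε * ↑(n - 1) < ℓ (θ^[n - 1] (θ x))
    rw [← Function.iterate_succ_apply, Nat.succ_eq_add_one, Nat.sub_add_cancel hn1]
    exact lt_of_le_of_lt (by gcongr; exact Nat.cast_le.mpr (Nat.sub_le n 1)) hn
  have hθD := hθ.restrict_of_mapsTo hDm hmaps
  have hfD := integrable_coboundary_of_integrable_posPart hθD hℓ hpos.restrict
  have hsumD : ∀ᵐ x ∂μ.restrict D,
      ∃ n : ℕ, n * (ε / 2) < birkhoffSum θ (fun y => ℓ (θ y) - ℓ y) n x := by
    filter_upwards [ae_restrict_mem hDm] with x hx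
    have hlarge : ∀ᶠ n : ℕ in atTop, ℓ x < ε / 2 * n :=
      (tendsto_natCast_atTop_atTop.const_mul_atTop (half_pos hε)).eventually_gt_atTop (ℓ x)
    obtain ⟨n, hn : ε * n < ℓ (θ^[n] x), hn'⟩ :=
      ((mem_limsup_iff_frequently_mem.mp hx).and_eventually hlarge).exists
    exact ⟨n, by rw [birkhoffSum_coboundary]; linarith⟩
  have hD : μ.real D = 0 := by
    have := mul_measureReal_univ_le_integral_of_ae_exists_birkhoffSum_gt
      (f := fun y => ℓ (θ y) - ℓ y) hθD ((hℓ.comp hθ.measurable).sub hℓ) hfD hsumD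
    rw [integral_coboundary_eq_zero hθD hℓ hfD, measureReal_restrict_apply_univ] at this
    nlinarith [measureReal_nonneg (μ := μ) (s := D)]
  have hD_ae : ∀ᵐ x ∂μ, x ∉ D :=
    measure_eq_zero_iff_ae_notMem.mp ((measureReal_eq_zero_iff (measure_ne_top μ D)).mp hD)
  filter_upwards [hD_ae] with x hx
  rw [mem_limsup_iff_frequently_mem, not_frequently] at hx
  exact hx.mono fun n hn => not_lt.mp hn

theorem ae_tendsto_coboundary_div [IsFiniteMeasure μ] (hθ : MeasurePreserving θ μ μ)
    (hℓ : Measurable ℓ) (hpos : Integrable (fun x => max (ℓ (θ x) - ℓ x) 0) μ) :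
    ∀ᵐ x ∂μ, Tendsto (fun n : ℕ => ℓ (θ^[n] x) / n) atTop (𝓝 0) := by
  have hneg : Integrable (fun x => max (-ℓ (θ x) - -ℓ x) 0) μ :=
    (integrable_coboundary_of_integrable_posPart hθ hℓ hpos).neg.pos_part.congr
      (.of_forall fun x => by simp only [Pi.neg_apply, neg_sub, neg_sub_neg])
  have hbound (k : ℕ) : ∀ᵐ x ∂μ, ∀ᶠ n : ℕ in atTop, |ℓ (θ^[n] x)| ≤ 1 / (k + 1) * n := by
    filter_upwards [ae_eventually_le_mul_of_coboundary hθ hℓ hpos k.one_div_pos_of_nat,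
      ae_eventually_le_mul_of_coboundary (ℓ := fun x => -ℓ x) hθ hℓ.neg hneg
        k.one_div_pos_of_nat] with x hup hlow
    filter_upwards [hup, hlow] with n h1 h2
    exact abs_le.mpr ⟨by linarith, h1⟩
  filter_upwards [ae_all_iff.mpr hbound] with x hx
  refine Metric.tendsto_nhds.mpr fun ε hε => ?_
  obtain ⟨k, hk⟩ := exists_nat_one_div_lt hε
  filter_upwards [hx k, eventually_ge_atTop 1] with n hn hn1
  have hn0 : (0 : ℝ) < n := Nat.cast_pos.mpr hn1
  rw [Real.dist_eq, sub_zero, abs_div, Nat.abs_cast, div_lt_iff₀ hn0]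
  exact hn.trans_lt (mul_lt_mul_of_pos_right hk hn0)

end Coboundary

/-- If `θ` preserves the probability measure `P` and `log⁺ (g (θ ω) / g ω)` is integrable
for a positive measurable `g`, then `g` is tempered:
`(1/n) log g(θⁿ ω) → 0` for `P`-a.e. `ω`. -/
theorem tempered_of_integrable_logPos_ratio
    {Ω : Type*} [MeasurableSpace Ω] (P : Measure Ω) [IsProbabilityMeasure P]
    (θ : Ω → Ω) (hθ : MeasurePreserving θ P P)
    (g : Ω → ℝ) (hg_meas : Measurable g) (hg_pos : ∀ ω, 0 < g ω)
    (hint : Integrable (fun ω => max (Real.log (g (θ ω) / g ω)) 0) P) :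
    ∀ᵐ ω ∂P, Tendsto (fun n : ℕ => Real.log (g (θ^[n] ω)) / n) atTop (𝓝 0) := by
  have hlog_div (ω : Ω) : Real.log (g (θ ω) / g ω) = Real.log (g (θ ω)) - Real.log (g ω) :=
    Real.log_div (hg_pos _).ne' (hg_pos ω).ne'
  simp only [hlog_div] at hint
  exact ae_tendsto_coboundary_div (ℓ := fun ω => Real.log (g ω)) hθ hg_meas.log hint
end

section
/- Let T : Y → Y be a continuous map of a compact metric space and Φ : Y → ℝ continuous. Suppose every T-invariant Borel probability measure m satisfies ∫ Φ dm ≥ Λ > 0. Then for every 0 < λ < Λ there exists a constant C > 0 such that Σ_{i=0}^{n-1} Φ(Tⁱy) ≥ log C + λn for all y ∈ Y and all n ≥ 1. -/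
/-!
If no constant `C` worked, there would be orbit segments `y_k, …, T^(n_k - 1) y_k` whose Birkhoff
sums of `Φ` lie below `-k + λ n_k`; as `Φ` is bounded, `n_k → ∞`. By compactness of the space of
probability measures, the empirical measures `n_k⁻¹ ∑_{i < n_k} δ_{Tⁱ y_k}` have a weak limit point
`μ` along an ultrafilter. It is `T`-invariant (Krylov–Bogolyubov), because the averages of `f ∘ T`
and of `f` over a segment of length `n` differ by at most `2‖f‖ / n`, and `∫ Φ dμ ≤ λ < Λ`,
contradicting the hypothesis on invariant measures.
-/

open MeasureTheory Filter Topology BoundedContinuousFunction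
open scoped ENNReal

theorem birkhoffAverage_comp_self (R : Type*) {α M : Type*} [DivisionSemiring R]
    [AddCommMonoid M] [Module R M] (f : α → α) (g : α → M) (n : ℕ) (x : α) :
    birkhoffAverage R f (g ∘ f) n x = birkhoffAverage R f g n (f x) := by
  simp only [birkhoffAverage, birkhoffSum, Function.comp_apply,
    ← Function.iterate_succ_apply' f, Function.iterate_succ_apply]

theorem tendsto_birkhoffAverage_apply_sub_birkhoffAverage_of_tendsto (𝕜 : Type*) [RCLike 𝕜]
    {α E ι : Type*} [NormedAddCommGroup E] [NormedSpace 𝕜 E] {g : α → E}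
    (hg : Bornology.IsBounded (Set.range g)) (f : α → α) {l : Filter ι} {n : ι → ℕ}
    (hn : Tendsto n l atTop) (x : ι → α) :
    Tendsto (fun i ↦ birkhoffAverage 𝕜 f g (n i) (f (x i)) - birkhoffAverage 𝕜 f g (n i) (x i))
      l (𝓝 0) := by
  obtain ⟨C, hC⟩ := Metric.isBounded_range_iff.1 hg
  have hCn : Tendsto (fun i ↦ C / n i) l (𝓝 0) :=
    tendsto_const_nhds.div_atTop (tendsto_natCast_atTop_atTop.comp hn)
  refine squeeze_zero_norm (fun i ↦ ?_) hCn
  rw [← dist_eq_norm, dist_birkhoffAverage_apply_birkhoffAverage]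
  gcongr
  exact hC _ _

section EmpiricalMeasure

variable {Y : Type*} [MeasurableSpace Y]

noncomputable def empiricalMeasure (T : Y → Y) (n : ℕ) (y : Y) : Measure Y :=
  (n : ℝ≥0∞)⁻¹ • ∑ i ∈ Finset.range n, Measure.dirac (T^[i] y)

theorem isProbabilityMeasure_empiricalMeasure (T : Y → Y) {n : ℕ} (hn : n ≠ 0) (y : Y) :
    IsProbabilityMeasure (empiricalMeasure T n y) := by
  constructor
  simpa [empiricalMeasure] using ENNReal.inv_mul_cancel (by simpa) (by simp)

theorem integral_empiricalMeasure {E : Type*} [NormedAddCommGroup E] [NormedSpace ℝ E]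
    [CompleteSpace E] (T : Y → Y) (n : ℕ) (y : Y) {f : Y → E} (hf : StronglyMeasurable f) :
    ∫ x, f x ∂empiricalMeasure T n y = birkhoffAverage ℝ T f n y := by
  rw [empiricalMeasure, integral_smul_measure,
    integral_finsetSum_measure fun i _ ↦ integrable_dirac' hf (by simp)]
  simp [birkhoffAverage, birkhoffSum, integral_dirac' _ _ hf]

end EmpiricalMeasure

section InvariantMeasure

variable {Y : Type*} [TopologicalSpace Y] [MeasurableSpace Y] [BorelSpace Y]

theorem map_eq_self_of_forall_integral_comp_eq [HasOuterApproxClosed Y] {T : Y → Y}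
    (hT : Continuous T) (μ : Measure Y) [IsFiniteMeasure μ]
    (h : ∀ f : Y →ᵇ ℝ, ∫ x, f (T x) ∂μ = ∫ x, f x ∂μ) : μ.map T = μ :=
  ext_of_forall_integral_eq_of_IsFiniteMeasure fun f ↦ by
    rw [integral_map hT.aemeasurable f.continuous.aestronglyMeasurable, h]

theorem exists_map_eq_self_integral_le_of_birkhoffAverage_le [TopologicalSpace.MetrizableSpace Y]
    [CompactSpace Y] {T : Y → Y} (hT : Continuous T) (f : Y →ᵇ ℝ) {y : ℕ → Y} {n : ℕ → ℕ}
    (hn : ∀ k, n k ≠ 0) (hn_top : Tendsto n atTop atTop) {c : ℝ}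
    (hc : ∀ k, birkhoffAverage ℝ T f (n k) (y k) ≤ c) :
    ∃ μ : ProbabilityMeasure Y, (μ : Measure Y).map T = μ ∧ ∫ x, f x ∂(μ : Measure Y) ≤ c := by
  let ν : ℕ → ProbabilityMeasure Y := fun k ↦
    ⟨empiricalMeasure T (n k) (y k), isProbabilityMeasure_empiricalMeasure T (hn k) (y k)⟩
  let U := Ultrafilter.of (atTop : Filter ℕ)
  obtain ⟨μ, -, hνμ⟩ := isCompact_univ.ultrafilter_le_nhds (U.map ν) (by simp)
  have hlim : ∀ g : Y →ᵇ ℝ,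
      Tendsto (fun k ↦ birkhoffAverage ℝ T g (n k) (y k)) U (𝓝 (∫ x, g x ∂(μ : Measure Y))) :=
    fun g ↦ by
      simpa [ν, integral_empiricalMeasure _ _ _ g.continuous.stronglyMeasurable] using
        ProbabilityMeasure.tendsto_iff_forall_integral_tendsto.1 hνμ g
  refine ⟨μ, map_eq_self_of_forall_integral_comp_eq hT _ fun g ↦ ?_, ?_⟩
  · have hshift := tendsto_birkhoffAverage_apply_sub_birkhoffAverage_of_tendsto ℝ
      g.isBounded_range T (hn_top.mono_left (Ultrafilter.of_le _)) y
    refine tendsto_nhds_unique (hlim (g.compContinuous ⟨T, hT⟩)) ?_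
    simpa [birkhoffAverage_comp_self] using (hlim g).add hshift
  · exact le_of_tendsto (hlim f) (.of_forall hc)

end InvariantMeasure

theorem uniform_birkhoff_bound_of_min_integral_pos_general
    {Y : Type*} [MetricSpace Y] [CompactSpace Y]
    [MeasurableSpace Y] [BorelSpace Y]
    (T : Y → Y) (hT : Continuous T)
    (Φ : Y → ℝ) (hΦ : Continuous Φ)
    (Λ : ℝ)
    (hmin : ∀ m : ProbabilityMeasure Y, (m : Measure Y).map T = (m : Measure Y) →
      Λ ≤ ∫ y, Φ y ∂(m : Measure Y)) :
    ∀ lam : ℝ, 0 < lam → lam < Λ →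
      ∃ C > 0, ∀ y : Y, ∀ n : ℕ, 1 ≤ n →
        Real.log C + lam * n ≤ ∑ i ∈ Finset.range n, Φ (T^[i] y) := by
  intro lam hlam hlamΛ
  by_contra! hbad
  choose y n hn hsum using fun k : ℕ ↦ hbad (Real.exp (-k)) (Real.exp_pos _)
  simp only [Real.log_exp] at hsum
  let Φb : Y →ᵇ ℝ := mkOfCompact ⟨Φ, hΦ⟩
  have hsum_ge : ∀ k, -(n k * ‖Φb‖) ≤ ∑ i ∈ Finset.range (n k), Φ (T^[i] (y k)) := fun k ↦ by
    simpa [Φb] using Finset.card_nsmul_le_sum (Finset.range (n k)) (fun i ↦ Φb (T^[i] (y k))) _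
      fun i _ ↦ neg_le_of_abs_le (Φb.norm_coe_le_norm _)
  have hn_top : Tendsto n atTop atTop := by
    have hlen : ∀ k : ℕ, (k : ℝ) ≤ (lam + ‖Φb‖) * n k := fun k ↦ by linarith [hsum k, hsum_ge k]
    exact (tendsto_natCast_atTop_iff (R := ℝ)).1 <|
      (tendsto_atTop_mono hlen tendsto_natCast_atTop_atTop).atTop_of_const_mul₀ (by positivity)
  obtain ⟨μ, hμT, hμΦ⟩ := exists_map_eq_self_integral_le_of_birkhoffAverage_le hT Φb
    (fun k ↦ Nat.one_le_iff_ne_zero.1 (hn k)) hn_top (y := y) (c := lam) fun k ↦ by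
      rw [birkhoffAverage, smul_eq_mul, inv_mul_le_iff₀ (by exact_mod_cast hn k), mul_comm]
      exact ((hsum k).trans_le (by linarith [(k.cast_nonneg : (0 : ℝ) ≤ k)])).le
  exact (hmin μ hμT).not_gt (hμΦ.trans_lt hlamΛ)

/-- If every `T`-invariant Borel probability measure `m` satisfies `∫ Φ dm ≥ Λ > 0`, then
for every `0 < lam < Λ` there is `C > 0` with `Σ_{i<n} Φ(Tⁱ y) ≥ log C + lam·n` for all
`y` and all `n ≥ 1`. -/
theorem uniform_birkhoff_bound_of_min_integral_pos
    {Y : Type*} [MetricSpace Y] [CompactSpace Y]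
    [MeasurableSpace Y] [BorelSpace Y]
    (T : Y → Y) (hT : Continuous T)
    (Φ : Y → ℝ) (hΦ : Continuous Φ)
    (Λ : ℝ) (hΛ : 0 < Λ)
    (hmin : ∀ m : ProbabilityMeasure Y, (m : Measure Y).map T = (m : Measure Y) →
      Λ ≤ ∫ y, Φ y ∂(m : Measure Y)) :
    ∀ lam : ℝ, 0 < lam → lam < Λ →
      ∃ C > 0, ∀ y : Y, ∀ n : ℕ, 1 ≤ n →
        Real.log C + lam * n ≤ ∑ i ∈ Finset.range n, Φ (T^[i] y) :=
  uniform_birkhoff_bound_of_min_integral_pos_general T hT Φ hΦ Λ hmin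
end
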